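/- arXiv:2003.02180 — 3 statements merged into one kernel-verified Lean document; each statement's English description precedes it below -/
import Mathlib

section
/- Let (R, x) be a random variable on SO(3)×ℝⁿ whose law has the matrix Fisher–Gaussian density with parameters (μ, Σ, P, U, S, V). Then the pushforward of this law under the map (R, x) ↦ (Q, y) with Q = UᵀRV and y = Σ_c^{−1/2}(x − μ − Pν_R) has density (c(S)·(2π)^{n/2})⁻¹ · exp(−(1/2)·yᵀy) · etr(SQᵀ) with respect to dQ × Lebesgue measure; i.e., (Q, y) follows the matrix Fisher–Gaussian distribution with parameters (0, I_n, 0, I₃, S, I₃). -/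
open Matrix MeasureTheory Real

noncomputable section

abbrev Mat3 := Matrix (Fin 3) (Fin 3) ℝ

instance : MeasurableSpace Mat3 :=
  show MeasurableSpace (Fin 3 → Fin 3 → ℝ) from inferInstance

/-- `SO(3)`: real 3×3 matrices with `RᵀR = I` and `det R = 1`. -/
def SO3 : Set Mat3 := {R | Rᵀ * R = 1 ∧ R.det = 1}

/-- The hat map `∧ : ℝ³ → ℝ^{3×3}`, `(hat v) w = v × w`. -/
def hat (v : Fin 3 → ℝ) : Mat3 :=
  !![0, -v 2, v 1; v 2, 0, -v 0; -v 1, v 0, 0]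

/-- The vee map `∨`, inverse of the hat map on skew-symmetric matrices. -/
def vee (A : Mat3) : Fin 3 → ℝ := ![A 2 1, A 0 2, A 1 0]

/-- `ν` is the bi-invariant Haar probability measure on `SO(3)`. -/
def IsHaarSO3 (ν : Measure Mat3) : Prop :=
  IsProbabilityMeasure ν ∧ ν SO3ᶜ = 0 ∧
    (∀ A ∈ SO3, Measure.map (fun R => A * R) ν = ν) ∧
    (∀ A ∈ SO3, Measure.map (fun R => R * A) ν = ν)

/-- The normalizing constant `c(F) = ∫_{SO(3)} etr(FᵀQ) dQ`. -/
def cF (ν : Measure Mat3) (F : Mat3) : ℝ := ∫ Q, Real.exp ((Fᵀ * Q).trace) ∂ν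

/-- The tangent-space deviation `ν_R = (QS − SQᵀ)∨`, `Q = UᵀRV`. -/
def nuR (U S V R : Mat3) : Fin 3 → ℝ :=
  vee ((Uᵀ * R * V) * S - S * (Uᵀ * R * V)ᵀ)

/-- `Σ_c = Σ − P(tr(S)I − S)Pᵀ`. -/
def sigmaC {n : ℕ} (Sig : Matrix (Fin n) (Fin n) ℝ) (P : Matrix (Fin n) (Fin 3) ℝ)
    (S : Mat3) : Matrix (Fin n) (Fin n) ℝ :=
  Sig - P * (S.trace • (1 : Mat3) - S) * Pᵀ

/-- The matrix Fisher–Gaussian density with parameters `(μ, Σ, P, U, S, V)`. -/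
def mfg {n : ℕ} (ν : Measure Mat3) (μ : Fin n → ℝ) (Sig : Matrix (Fin n) (Fin n) ℝ)
    (P : Matrix (Fin n) (Fin 3) ℝ) (U S V : Mat3) (R : Mat3) (x : Fin n → ℝ) : ℝ :=
  (cF ν (U * S * Vᵀ) * Real.sqrt ((2 * Real.pi) ^ n * (sigmaC Sig P S).det))⁻¹ *
    Real.exp (-(1/2) * ((x - (μ + P.mulVec (nuR U S V R))) ⬝ᵥ
      ((sigmaC Sig P S)⁻¹ *ᵥ (x - (μ + P.mulVec (nuR U S V R)))))) *
    Real.exp ((U * S * Vᵀ * Rᵀ).trace)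

/-! `Q = UᵀRV` is again Haar distributed by bi-invariance of `dQ`, and for fixed `R` the map
`x ↦ A⁻¹(x - μ_c(R))`, with `A = Σ_c^{1/2}`, is affine with Jacobian `(det A)⁻¹`. The change of
variables therefore multiplies the density by `det A = (det Σ_c)^{1/2}`, which cancels the
Gaussian normalization and turns the quadratic form into `yᵀy`. Invariance of `dQ` also gives
`c(USVᵀ) = c(S)`, and orthogonality of `U, V` gives `tr(USVᵀRᵀ) = tr(SQᵀ)`. -/

open scoped MatrixOrder ComplexOrder

instance : BorelSpace Mat3 := show BorelSpace (Fin 3 → Fin 3 → ℝ) from inferInstance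

section SO3

variable {U V : Mat3}

lemma transpose_mem_SO3 (hU : U ∈ SO3) : Uᵀ ∈ SO3 :=
  ⟨by simpa using mul_eq_one_comm.mp hU.1, by simpa using hU.2⟩

lemma mul_transpose_of_mem_SO3 (hU : U ∈ SO3) : U * Uᵀ = 1 :=
  mul_eq_one_comm.mp hU.1

lemma mul_mul_transpose_cancel (hU : U ∈ SO3) (hV : V ∈ SO3) (R : Mat3) :
    U * (Uᵀ * R * V) * Vᵀ = R := by
  simp only [← Matrix.mul_assoc, mul_transpose_of_mem_SO3 hU, Matrix.one_mul]
  rw [Matrix.mul_assoc, mul_transpose_of_mem_SO3 hV, Matrix.mul_one]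

lemma transpose_mul_mul_cancel (hU : U ∈ SO3) (hV : V ∈ SO3) (R : Mat3) :
    Uᵀ * (U * R * Vᵀ) * V = R := by
  simpa using mul_mul_transpose_cancel (transpose_mem_SO3 hU) (transpose_mem_SO3 hV) R

lemma trace_mul_mul_transpose_mul_mul (hU : U ∈ SO3) (hV : V ∈ SO3) (F Q : Mat3) :
    (U * F * Vᵀ * (U * Q * Vᵀ)ᵀ).trace = (F * Qᵀ).trace := by
  have hconj : U * F * Vᵀ * (U * Q * Vᵀ)ᵀ = U * (F * Qᵀ) * Uᵀ := by
    simp only [Matrix.transpose_mul, Matrix.transpose_transpose, Matrix.mul_assoc]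
    rw [← Matrix.mul_assoc Vᵀ V, hV.1, Matrix.one_mul]
  rw [hconj, Matrix.trace_mul_cycle, ← Matrix.mul_assoc, hU.1, Matrix.one_mul]

lemma IsHaarSO3.map_mul_mul {ν : Measure Mat3} (hν : IsHaarSO3 ν) (hU : U ∈ SO3)
    (hV : V ∈ SO3) : ν.map (fun R => U * R * V) = ν := by
  change ν.map ((fun R => R * V) ∘ (fun R => U * R)) = ν
  rw [← Measure.map_map (by fun_prop) (by fun_prop), hν.2.2.1 U hU, hν.2.2.2 V hV]

lemma cF_mul_mul_transpose {ν : Measure Mat3} (hν : IsHaarSO3 ν) (hU : U ∈ SO3) (hV : V ∈ SO3)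
    (F : Mat3) : cF ν (U * F * Vᵀ) = cF ν F := by
  conv_lhs => rw [cF, ← hν.map_mul_mul hU (transpose_mem_SO3 hV)]
  rw [integral_map (by fun_prop) (by fun_prop : Continuous _).aestronglyMeasurable]
  congr 1 with R
  rw [trace_mul_comm, trace_mul_mul_transpose_mul_mul hU hV, trace_mul_comm]

end SO3

@[fun_prop]
lemma continuous_nuR (U S V : Mat3) : Continuous (nuR U S V) := by
  unfold nuR vee
  fun_prop

lemma MeasurableEquiv.map_withDensity {α β : Type*} [MeasurableSpace α] [MeasurableSpace β]
    (T : α ≃ᵐ β) (m : Measure α) (ρ : α → ENNReal) :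
    (m.withDensity ρ).map T = (m.map T).withDensity (ρ ∘ T.symm) := by
  ext E hE
  rw [Measure.map_apply T.measurable hE, withDensity_apply _ hE,
    withDensity_apply _ (T.measurable hE), T.restrict_map, lintegral_map_equiv]
  simp

lemma MeasureTheory.Measure.map_skewProduct_prod {α β : Type*} [MeasurableSpace α]
    [MeasurableSpace β] {ν : Measure α} {μ : Measure β} [SFinite μ] {φ : α → α} (hφ : Measurable φ)
    (hφν : ν.map φ = ν) {h : α → β → β} (hh : Measurable (Function.uncurry h))
    {c : ENNReal} (hc : ∀ a, μ.map (h a) = c • μ) :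
    (ν.prod μ).map (fun z => (φ z.1, h z.1 z.2)) = c • ν.prod μ := by
  have hT : Measurable fun z : α × β => (φ z.1, h z.1 z.2) := (hφ.comp measurable_fst).prodMk hh
  ext E hE
  have hfibre : ∀ a, μ (Prod.mk a ⁻¹' ((fun z => (φ z.1, h z.1 z.2)) ⁻¹' E))
      = c * μ (Prod.mk (φ a) ⁻¹' E) := fun a => by
    have hha : Measurable (h a) := hh.comp measurable_prodMk_left
    rw [← smul_eq_mul, ← Measure.smul_apply, ← hc a,
      Measure.map_apply hha (measurable_prodMk_left hE)]
    rfl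
  rw [Measure.map_apply hT hE, Measure.prod_apply (hT hE), Measure.smul_apply, smul_eq_mul,
    Measure.prod_apply hE, lintegral_congr hfibre,
    lintegral_const_mul (f := fun a => μ (Prod.mk (φ a) ⁻¹' E)) _
      ((measurable_measure_prodMk_left hE).comp hφ),
    ← lintegral_map (f := fun a => μ (Prod.mk a ⁻¹' E)) (measurable_measure_prodMk_left hE) hφ,
    hφν]

lemma map_volume_inv_mulVec_sub {ι : Type*} [Fintype ι] [DecidableEq ι] {A : Matrix ι ι ℝ}
    (hA : A.det ≠ 0) (b : ι → ℝ) :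
    volume.map (fun x => A⁻¹ *ᵥ (x - b)) = ENNReal.ofReal |A.det| • volume := by
  have hA' : A⁻¹.det ≠ 0 := by
    simpa [det_nonsing_inv, Ring.inverse_eq_inv'] using hA
  change volume.map (toLin' A⁻¹ ∘ fun x => x + -b) = _
  rw [← Measure.map_map (by fun_prop) (by fun_prop), map_add_right_eq_self,
    Real.map_matrix_volume_pi_eq_smul_volume_pi hA', det_nonsing_inv, Ring.inverse_eq_inv',
    inv_inv]

theorem Matrix.PosSemidef.cfc_sqrt_eq_sqrt {𝕜 ι : Type*} [RCLike 𝕜] [Fintype ι] [DecidableEq ι]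
    {M : Matrix ι ι 𝕜} (hM : M.PosSemidef) : hM.1.cfc Real.sqrt = CFC.sqrt M := by
  rw [CFC.sqrt_eq_cfc, cfc_nnreal_eq_real _ M hM.nonneg, hM.1.cfc_eq]
  simp only [IsHermitian.cfc]
  congr 3 with i
  simp [max_eq_left (hM.eigenvalues_nonneg i)]

lemma Matrix.dotProduct_mul_self_inv_mulVec {ι R : Type*} [Fintype ι] [DecidableEq ι]
    [CommRing R] {A : Matrix ι ι R} (hAT : Aᵀ = A) (hA : IsUnit A.det) (y : ι → R) :
    (A *ᵥ y) ⬝ᵥ ((A * A)⁻¹ *ᵥ (A *ᵥ y)) = y ⬝ᵥ y := by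
  rw [Matrix.mul_inv_rev, mulVec_mulVec, Matrix.mul_assoc, nonsing_inv_mul _ hA, Matrix.mul_one,
    dotProduct_mulVec, ← mulVec_transpose, transpose_nonsing_inv, hAT, mulVec_mulVec,
    nonsing_inv_mul _ hA, one_mulVec]

variable {n : ℕ}

def standardize (U V : Mat3) (hU : U ∈ SO3) (hV : V ∈ SO3) {A : Matrix (Fin n) (Fin n) ℝ}
    (hA : IsUnit A.det) (b : Mat3 → Fin n → ℝ) (hb : Measurable b) :
    (Mat3 × (Fin n → ℝ)) ≃ᵐ (Mat3 × (Fin n → ℝ)) where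
  toFun z := (Uᵀ * z.1 * V, A⁻¹ *ᵥ (z.2 - b z.1))
  invFun w := (U * w.1 * Vᵀ, A *ᵥ w.2 + b (U * w.1 * Vᵀ))
  left_inv z := by
    simp only [mul_mul_transpose_cancel hU hV, mulVec_mulVec, mul_nonsing_inv _ hA, one_mulVec,
      sub_add_cancel]
  right_inv w := by
    simp only [transpose_mul_mul_cancel hU hV, add_sub_cancel_right, mulVec_mulVec,
      nonsing_inv_mul _ hA, one_mulVec]
  measurable_toFun := by simp only [Equiv.coe_fn_mk]; fun_prop
  measurable_invFun := by simp only [Equiv.coe_fn_symm_mk]; fun_prop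

lemma map_standardize_prod {ν : Measure Mat3} (hν : IsHaarSO3 ν) {U V : Mat3} (hU : U ∈ SO3)
    (hV : V ∈ SO3) {A : Matrix (Fin n) (Fin n) ℝ} (hA : IsUnit A.det) (b : Mat3 → Fin n → ℝ)
    (hb : Measurable b) :
    (ν.prod volume).map (standardize U V hU hV hA b hb)
      = ENNReal.ofReal |A.det| • ν.prod volume :=
  Measure.map_skewProduct_prod (by fun_prop) (hν.map_mul_mul (transpose_mem_SO3 hU) hV)
    (by fun_prop) fun R => map_volume_inv_mulVec_sub hA.ne_zero (b R)

lemma Matrix.PosDef.det_sqrt_pos {ι : Type*} [Fintype ι] [DecidableEq ι] {M : Matrix ι ι ℝ}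
    (hM : M.PosDef) : 0 < (CFC.sqrt M).det := by
  rw [hM.posSemidef.det_sqrt, RCLike.sqrt_real]
  exact Real.sqrt_pos.2 hM.det_pos

lemma det_mul_mfg_unstandardize {ν : Measure Mat3} (hν : IsHaarSO3 ν) (μ : Fin n → ℝ)
    (Sig : Matrix (Fin n) (Fin n) ℝ) (P : Matrix (Fin n) (Fin 3) ℝ) {U V : Mat3} (hU : U ∈ SO3)
    (hV : V ∈ SO3) (S : Mat3) (hc : (sigmaC Sig P S).PosDef) {A : Matrix (Fin n) (Fin n) ℝ}
    (hA : A = CFC.sqrt (sigmaC Sig P S)) (Q : Mat3) (y : Fin n → ℝ) :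
    A.det * mfg ν μ Sig P U S V (U * Q * Vᵀ) (A *ᵥ y + (μ + P *ᵥ nuR U S V (U * Q * Vᵀ)))
      = (cF ν S * √((2 * π) ^ n))⁻¹ * exp (-(1/2) * (y ⬝ᵥ y)) * exp ((S * Qᵀ).trace) := by
  have hsq : A * A = sigmaC Sig P S := hA ▸ CFC.sqrt_mul_sqrt_self _ hc.posSemidef.nonneg
  have hAT : Aᵀ = A := hA ▸ (nonneg_iff_posSemidef.mp (CFC.sqrt_nonneg _)).1
  have hdet : √(sigmaC Sig P S).det = A.det := by
    rw [hA, hc.posSemidef.det_sqrt, RCLike.sqrt_real]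
  have hdet_pos : 0 < A.det := hA ▸ hc.det_sqrt_pos
  unfold mfg
  rw [add_sub_cancel_right, ← hsq,
    dotProduct_mul_self_inv_mulVec hAT (isUnit_iff_ne_zero.2 hdet_pos.ne'), hsq,
    trace_mul_mul_transpose_mul_mul hU hV, cF_mul_mul_transpose hν hU hV,
    Real.sqrt_mul (by positivity), hdet]
  field_simp

theorem stmt11_general (n : ℕ) (ν : Measure Mat3) (hν : IsHaarSO3 ν)
    (μ : Fin n → ℝ) (Sig : Matrix (Fin n) (Fin n) ℝ) (P : Matrix (Fin n) (Fin 3) ℝ)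
    (U V : Mat3) (hU : U ∈ SO3) (hV : V ∈ SO3)
    (S : Mat3)
    (hc : (sigmaC Sig P S).PosDef)
    (A : Matrix (Fin n) (Fin n) ℝ) (hA : A = (hc.posSemidef.1.eigenvectorUnitary : Matrix (Fin n) (Fin n) ℝ) *
      diagonal ((RCLike.ofReal : ℝ → ℝ) ∘ Real.sqrt ∘ hc.posSemidef.1.eigenvalues) *
      (star hc.posSemidef.1.eigenvectorUnitary : Matrix (Fin n) (Fin n) ℝ)) :
    Measure.map
        (fun z : Mat3 × (Fin n → ℝ) =>
          (Uᵀ * z.1 * V, A⁻¹ *ᵥ (z.2 - μ - P *ᵥ nuR U S V z.1)))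
        ((ν.prod volume).withDensity fun z =>
          ENNReal.ofReal (mfg ν μ Sig P U S V z.1 z.2))
      = (ν.prod volume).withDensity fun z =>
          ENNReal.ofReal ((cF ν S * Real.sqrt ((2 * Real.pi) ^ n))⁻¹ *
            Real.exp (-(1/2) * (z.2 ⬝ᵥ z.2)) * Real.exp ((S * z.1ᵀ).trace)) := by
  replace hA : A = CFC.sqrt (sigmaC Sig P S) := by
    rw [hA, ← hc.posSemidef.cfc_sqrt_eq_sqrt, IsHermitian.cfc, Unitary.conjStarAlgAut_apply]
  have hdet : 0 < A.det := hA ▸ hc.det_sqrt_pos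
  have hb : Measurable fun R => μ + P *ᵥ nuR U S V R := by fun_prop
  have hmap : (fun z : Mat3 × (Fin n → ℝ) =>
      (Uᵀ * z.1 * V, A⁻¹ *ᵥ (z.2 - μ - P *ᵥ nuR U S V z.1)))
      = standardize U V hU hV (isUnit_iff_ne_zero.2 hdet.ne') _ hb := by
    funext z
    simp [standardize, sub_sub]
  rw [hmap, MeasurableEquiv.map_withDensity, map_standardize_prod hν,
    withDensity_smul_measure, ← withDensity_smul' _ _ ENNReal.ofReal_ne_top]
  congr 1 with ⟨Q, y⟩
  rw [Pi.smul_apply, smul_eq_mul, Function.comp_apply, ← ENNReal.ofReal_mul (abs_nonneg _),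
    abs_of_pos hdet]
  exact congrArg ENNReal.ofReal (det_mul_mfg_unstandardize hν μ Sig P hU hV S hc hA Q y)

/-- The pushforward of the MFG law under
`(R, x) ↦ (Q, y) = (UᵀRV, Σ_c^{−1/2}(x − μ − Pν_R))` has density
`(c(S)(2π)^{n/2})⁻¹ exp(−yᵀy/2) etr(SQᵀ)` w.r.t. `dQ × Lebesgue`; i.e. `(Q, y)`
follows the MFG distribution with parameters `(0, Iₙ, 0, I₃, S, I₃)`. -/
theorem stmt11 (n : ℕ) (ν : Measure Mat3) (hν : IsHaarSO3 ν)
    (μ : Fin n → ℝ) (Sig : Matrix (Fin n) (Fin n) ℝ) (P : Matrix (Fin n) (Fin 3) ℝ)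
    (U V : Mat3) (hU : U ∈ SO3) (hV : V ∈ SO3)
    (s : Fin 3 → ℝ) (S : Mat3) (hS : S = Matrix.diagonal s)
    (hSig : Sig.IsSymm) (hc : (sigmaC Sig P S).PosDef)
    (A : Matrix (Fin n) (Fin n) ℝ) (hA : A = (hc.posSemidef.1.eigenvectorUnitary : Matrix (Fin n) (Fin n) ℝ) *
      diagonal ((RCLike.ofReal : ℝ → ℝ) ∘ Real.sqrt ∘ hc.posSemidef.1.eigenvalues) *
      (star hc.posSemidef.1.eigenvectorUnitary : Matrix (Fin n) (Fin n) ℝ)) :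
    Measure.map
        (fun z : Mat3 × (Fin n → ℝ) =>
          (Uᵀ * z.1 * V, A⁻¹ *ᵥ (z.2 - μ - P *ᵥ nuR U S V z.1)))
        ((ν.prod volume).withDensity fun z =>
          ENNReal.ofReal (mfg ν μ Sig P U S V z.1 z.2))
      = (ν.prod volume).withDensity fun z =>
          ENNReal.ofReal ((cF ν S * Real.sqrt ((2 * Real.pi) ^ n))⁻¹ *
            Real.exp (-(1/2) * (z.2 ⬝ᵥ z.2)) * Real.exp ((S * z.1ᵀ).trace)) :=
  stmt11_general n ν hν μ Sig P U V hU hV S hc A hA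

end
end

section
/- Let s ∈ ℝ and S = s·I₃. Then for every T ∈ SO(3) and every (R, x) ∈ SO(3)×ℝⁿ, the matrix Fisher–Gaussian density with parameters (μ, Σ, P, U, S, V) equals the matrix Fisher–Gaussian density with parameters (μ, Σ, PT, UT, S, VT); i.e., when all three singular values of the matrix Fisher parameter are equal, the MFG distribution is invariant under a simultaneous rotation of U, V, and P by any T ∈ SO(3). -/
open Matrix MeasureTheory Real

noncomputable section

/-! For `S = s • 1` we have `T S Tᵀ = S`, so `F = U S Vᵀ` and `Σ_c` do not change when `U`, `V`
and `P` are multiplied by `T` on the right. The deviation becomes `ν'_R = (Tᵀ A T)∨` with `A`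
skew, and for a rotation `T` one has `Tᵀ â T = (Tᵀ a)∧`, so `ν'_R = Tᵀ ν_R` and the mean
`μ + (P T) ν'_R` is unchanged as well. -/

theorem Matrix.adjugate_eq_transpose_of_transpose_mul_self_eq_one {m : Type*} [Fintype m]
    [DecidableEq m] {α : Type*} [CommRing α] {M : Matrix m m α} (hM : Mᵀ * M = 1)
    (hdet : M.det = 1) : M.adjugate = Mᵀ :=
  calc M.adjugate = Mᵀ * M * M.adjugate := by rw [hM, Matrix.one_mul]
    _ = Mᵀ := by rw [Matrix.mul_assoc, Matrix.mul_adjugate, hdet, one_smul, Matrix.mul_one]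

theorem Matrix.mul_smul_one_mul_transpose {m : Type*} [Fintype m] [DecidableEq m]
    {α : Type*} [CommRing α] {T : Matrix m m α} (hT : T * Tᵀ = 1) (s : α) :
    T * (s • 1) * Tᵀ = s • 1 := by
  rw [Matrix.mul_smul, Matrix.mul_one, Matrix.smul_mul, hT]

theorem vee_hat (a : Fin 3 → ℝ) : vee (hat a) = a := by
  ext i; fin_cases i <;> rfl

theorem hat_vee_of_transpose_eq_neg {A : Mat3} (hA : Aᵀ = -A) : hat (vee A) = A := by
  have h : ∀ i j, A j i = -A i j := fun i j => congrFun (congrFun hA i) j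
  have h00 := h 0 0; have h11 := h 1 1; have h22 := h 2 2
  ext i j; fin_cases i <;> fin_cases j <;> simp [hat, vee, h 0 1, h 0 2, h 1 2] <;> linarith

-- Rotation covariance of the cross product, `(Mu) × (Mv) = adj(M)ᵀ (u × v)`, in hat-map form.
theorem transpose_mul_hat_mul (M : Mat3) (a : Fin 3 → ℝ) :
    Mᵀ * hat a * M = hat (M.adjugate *ᵥ a) := by
  ext i j
  fin_cases i <;> fin_cases j <;>
    simp [hat, Matrix.adjugate_fin_three, Matrix.mul_apply, Matrix.mulVec, dotProduct,
      Fin.sum_univ_three] <;> ring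

theorem vee_transpose_mul_mul {T : Mat3} (hT : T ∈ SO3) {A : Mat3} (hA : Aᵀ = -A) :
    vee (Tᵀ * A * T) = Tᵀ *ᵥ vee A := by
  rw [← hat_vee_of_transpose_eq_neg hA, transpose_mul_hat_mul,
    Matrix.adjugate_eq_transpose_of_transpose_mul_self_eq_one hT.1 hT.2, vee_hat, vee_hat]

theorem nuR_mul_right_smul_one {T : Mat3} (hT : T ∈ SO3) (U V R : Mat3) (s : ℝ) :
    nuR (U * T) (s • 1) (V * T) R = Tᵀ *ᵥ nuR U (s • 1) V R := by
  set Q := Uᵀ * R * V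
  have hskew : (s • (Q - Qᵀ))ᵀ = -(s • (Q - Qᵀ)) := by
    rw [Matrix.transpose_smul, Matrix.transpose_sub, Matrix.transpose_transpose, ← smul_neg,
      neg_sub]
  have hconj : (U * T)ᵀ * R * (V * T) * (s • 1) - (s • 1) * ((U * T)ᵀ * R * (V * T))ᵀ
      = Tᵀ * (s • (Q - Qᵀ)) * T := by
    simp only [Q, Matrix.transpose_mul, Matrix.transpose_transpose, Matrix.mul_sub,
      Matrix.sub_mul, Matrix.mul_smul, Matrix.smul_mul, Matrix.mul_one, Matrix.one_mul,
      Matrix.mul_assoc, smul_sub]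
  have hQ : Q * (s • 1) - (s • 1) * Qᵀ = s • (Q - Qᵀ) := by
    rw [Matrix.mul_smul, Matrix.smul_mul, Matrix.mul_one, Matrix.one_mul, smul_sub]
  unfold nuR
  rw [hconj, vee_transpose_mul_mul hT hskew, hQ]

theorem sigmaC_mul_right_smul_one {n : ℕ} (Sig : Matrix (Fin n) (Fin n) ℝ)
    (P : Matrix (Fin n) (Fin 3) ℝ) {T : Mat3} (hT : T * Tᵀ = 1) (s : ℝ) :
    sigmaC Sig (P * T) (s • 1) = sigmaC Sig P (s • 1) := by
  have hS : (s • 1 : Mat3).trace • (1 : Mat3) - s • 1 = ((s • 1 : Mat3).trace - s) • 1 :=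
    (sub_smul _ _ _).symm
  have hconj : ∀ c : ℝ, P * T * (c • 1 : Mat3) * (P * T)ᵀ = P * (T * (c • 1) * Tᵀ) * Pᵀ := by
    intro c; simp only [Matrix.transpose_mul, Matrix.mul_assoc]
  rw [sigmaC, sigmaC, hS, hconj, Matrix.mul_smul_one_mul_transpose hT]

theorem stmt18_general (n : ℕ) (ν : Measure Mat3)
    (μ : Fin n → ℝ) (Sig : Matrix (Fin n) (Fin n) ℝ) (P : Matrix (Fin n) (Fin 3) ℝ)
    (U V : Mat3)
    (sc : ℝ) (S : Mat3) (hS : S = sc • (1 : Mat3)) :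
    ∀ T ∈ SO3, ∀ R ∈ SO3, ∀ x : Fin n → ℝ,
      mfg ν μ Sig P U S V R x = mfg ν μ Sig (P * T) (U * T) S (V * T) R x := by
  subst hS
  rintro T hT R - x
  have hTT : T * Tᵀ = 1 := mul_eq_one_comm.mp hT.1
  have hF : U * T * (sc • 1) * (V * T)ᵀ = U * (sc • 1) * Vᵀ := by
    rw [Matrix.transpose_mul, ← Matrix.mul_assoc, Matrix.mul_assoc U, Matrix.mul_assoc U,
      Matrix.mul_smul_one_mul_transpose hTT, Matrix.mul_assoc]
  have hmean : (P * T) *ᵥ nuR (U * T) (sc • 1) (V * T) R = P *ᵥ nuR U (sc • 1) V R := by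
    rw [nuR_mul_right_smul_one hT, Matrix.mulVec_mulVec, Matrix.mul_assoc, hTT,
      Matrix.mul_one]
  unfold mfg
  rw [hF, sigmaC_mul_right_smul_one Sig P hTT, hmean]

/-- When `S = s·I₃`, the MFG distribution is invariant under a
simultaneous rotation of `U`, `V`, and `P` by any `T ∈ SO(3)`. -/
theorem stmt18 (n : ℕ) (ν : Measure Mat3) (hν : IsHaarSO3 ν)
    (μ : Fin n → ℝ) (Sig : Matrix (Fin n) (Fin n) ℝ) (P : Matrix (Fin n) (Fin 3) ℝ)
    (U V : Mat3) (hU : U ∈ SO3) (hV : V ∈ SO3) (hSig : Sig.IsSymm)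
    (sc : ℝ) (S : Mat3) (hS : S = sc • (1 : Mat3))
    (hc : (sigmaC Sig P S).PosDef) :
    ∀ T ∈ SO3, ∀ R ∈ SO3, ∀ x : Fin n → ℝ,
      mfg ν μ Sig P U S V R x = mfg ν μ Sig (P * T) (U * T) S (V * T) R x :=
  stmt18_general n ν μ Sig P U V sc S hS

end
end

section
/- For i ∈ {1,2,3}, let 𝒟_i be the diagonal matrix whose i-th diagonal entry is +1 and whose other two diagonal entries are −1 (so 𝒟_i ∈ SO(3)). Then for every (R, x) ∈ SO(3)×ℝⁿ, the matrix Fisher–Gaussian density with parameters (μ, Σ, P, U, S, V) equals the matrix Fisher–Gaussian density with parameters (μ, Σ, P𝒟_i, U𝒟_i, S, V𝒟_i). -/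
open Matrix MeasureTheory Real

noncomputable section

/-
Replacing `(P, U, V)` by `(PD, UD, VD)` for an orthogonal `D` commuting with `S` leaves
`F = (UD) S (VD)ᵀ` and `Σ_c` unchanged and conjugates `QS − SQᵀ` by `D`. For a diagonal
`D ∈ SO(3)` the vee map turns this conjugation into multiplication by `D`, which `P ↦ PD`
cancels since `D² = 1`.
-/

section Orthogonal

variable {D S : Mat3}

theorem commute_transpose_of_orthogonal (hD : Dᵀ * D = 1) (hDS : Commute D S) :
    Commute Dᵀ S := by
  have hD' : D * Dᵀ = 1 := mul_eq_one_comm.mp hD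
  calc Dᵀ * S = Dᵀ * (S * D) * Dᵀ := by rw [mul_assoc, mul_assoc, hD', mul_one]
    _ = Dᵀ * D * S * Dᵀ := by rw [← hDS.eq]; simp only [mul_assoc]
    _ = S * Dᵀ := by rw [hD, one_mul]

theorem mul_mul_transpose_of_commute (hD : Dᵀ * D = 1) (hDS : Commute D S) :
    D * S * Dᵀ = S := by
  rw [hDS.eq, mul_assoc, mul_eq_one_comm.mp hD, mul_one]

theorem mul_mul_mul_transpose_of_commute (hD : Dᵀ * D = 1) (hDS : Commute D S) (U V : Mat3) :
    U * D * S * (V * D)ᵀ = U * S * Vᵀ := by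
  calc U * D * S * (V * D)ᵀ = U * (D * S * Dᵀ) * Vᵀ := by
        rw [transpose_mul]; simp only [mul_assoc]
    _ = U * S * Vᵀ := by rw [mul_mul_transpose_of_commute hD hDS]

theorem sigmaC_mul_right_of_commute {n : ℕ} (Sig : Matrix (Fin n) (Fin n) ℝ)
    (P : Matrix (Fin n) (Fin 3) ℝ) (hD : Dᵀ * D = 1) (hDS : Commute D S) :
    sigmaC Sig (P * D) S = sigmaC Sig P S := by
  have hconj : D * (S.trace • (1 : Mat3) - S) * Dᵀ = S.trace • (1 : Mat3) - S := by
    rw [mul_sub, sub_mul, Matrix.mul_smul, mul_one, Matrix.smul_mul, mul_eq_one_comm.mp hD,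
      mul_mul_transpose_of_commute hD hDS]
  unfold sigmaC
  rw [transpose_mul, show P * D * (S.trace • (1 : Mat3) - S) * (Dᵀ * Pᵀ) =
    P * (D * (S.trace • (1 : Mat3) - S) * Dᵀ) * Pᵀ by simp only [Matrix.mul_assoc], hconj]

theorem nuR_mul_right_of_commute (hD : Dᵀ * D = 1) (hDS : Commute D S) (U V R : Mat3) :
    nuR (U * D) S (V * D) R =
      vee (Dᵀ * ((Uᵀ * R * V) * S - S * (Uᵀ * R * V)ᵀ) * D) := by
  have hDTS := commute_transpose_of_orthogonal hD hDS
  unfold nuR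
  congr 1
  simp only [transpose_mul, transpose_transpose, mul_sub, sub_mul, mul_assoc, hDS.eq]
  rw [← mul_assoc S, ← hDTS.eq, mul_assoc]

end Orthogonal

section Diagonal

variable {d : Fin 3 → ℝ}

theorem mul_self_eq_one_of_diagonal_mem_SO3 (hd : diagonal d ∈ SO3) (k : Fin 3) :
    d k * d k = 1 := by
  simpa [diagonal_transpose, diagonal_mul_diagonal] using congrFun (congrFun hd.1 k) k

theorem prod_eq_one_of_diagonal_mem_SO3 (hd : diagonal d ∈ SO3) : d 0 * d 1 * d 2 = 1 := by
  simpa [det_diagonal, Fin.prod_univ_three] using hd.2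

theorem vee_diagonal_mul_mul_diagonal (hd : diagonal d ∈ SO3) (A : Mat3) :
    vee (diagonal d * A * diagonal d) = diagonal d *ᵥ vee A := by
  have h0 := mul_self_eq_one_of_diagonal_mem_SO3 hd 0
  have h1 := mul_self_eq_one_of_diagonal_mem_SO3 hd 1
  have h2 := mul_self_eq_one_of_diagonal_mem_SO3 hd 2
  have hdet := prod_eq_one_of_diagonal_mem_SO3 hd
  have e0 : d 2 * d 1 = d 0 := by linear_combination d 0 * hdet - d 1 * d 2 * h0
  have e1 : d 0 * d 2 = d 1 := by linear_combination d 1 * hdet - d 0 * d 2 * h1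
  have e2 : d 1 * d 0 = d 2 := by linear_combination d 2 * hdet - d 0 * d 1 * h2
  ext k
  fin_cases k <;>
    simp only [vee, mul_diagonal, diagonal_mul, mulVec_diagonal, Fin.zero_eta, Fin.mk_one,
      Fin.reduceFinMk, cons_val, cons_val_zero, cons_val_one]
  · linear_combination A 2 1 * e0
  · linear_combination A 0 2 * e1
  · linear_combination A 1 0 * e2

theorem mfg_mul_diagonal {n : ℕ} (ν : Measure Mat3) (μ : Fin n → ℝ)
    (Sig : Matrix (Fin n) (Fin n) ℝ) (P : Matrix (Fin n) (Fin 3) ℝ) (U S V R : Mat3)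
    (x : Fin n → ℝ) (hd : diagonal d ∈ SO3) (hdS : Commute (diagonal d) S) :
    mfg ν μ Sig (P * diagonal d) (U * diagonal d) S (V * diagonal d) R x =
      mfg ν μ Sig P U S V R x := by
  have hD : (diagonal d)ᵀ * diagonal d = 1 := hd.1
  have hDD : diagonal d * diagonal d = 1 := by rwa [diagonal_transpose] at hD
  have hmulVec : (P * diagonal d) *ᵥ nuR (U * diagonal d) S (V * diagonal d) R =
      P *ᵥ nuR U S V R := by
    rw [nuR_mul_right_of_commute hD hdS, diagonal_transpose, vee_diagonal_mul_mul_diagonal hd,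
      mulVec_mulVec, Matrix.mul_assoc P, hDD, Matrix.mul_one, nuR]
  unfold mfg
  rw [mul_mul_mul_transpose_of_commute hD hdS, sigmaC_mul_right_of_commute Sig P hD hdS,
    hmulVec]

end Diagonal

theorem diagonal_sign_flip_mem_SO3 (i : Fin 3) :
    diagonal (fun k => if k = i then (1 : ℝ) else -1) ∈ SO3 := by
  refine ⟨?_, ?_⟩
  · rw [diagonal_transpose, diagonal_mul_diagonal, ← diagonal_one]
    congr 1
    ext k
    split_ifs <;> norm_num
  · fin_cases i <;> simp [det_diagonal, Fin.prod_univ_three]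

theorem stmt19_general (n : ℕ) (ν : Measure Mat3)
    (μ : Fin n → ℝ) (Sig : Matrix (Fin n) (Fin n) ℝ) (P : Matrix (Fin n) (Fin 3) ℝ)
    (U V : Mat3)
    (s : Fin 3 → ℝ) (S : Mat3) (hS : S = Matrix.diagonal s)
    (i : Fin 3) (D : Mat3)
    (hD : D = Matrix.diagonal (fun k => if k = i then (1 : ℝ) else -1)) :
    ∀ R ∈ SO3, ∀ x : Fin n → ℝ,
      mfg ν μ Sig P U S V R x = mfg ν μ Sig (P * D) (U * D) S (V * D) R x := by
  intro R _ x
  subst hS hD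
  exact (mfg_mul_diagonal ν μ Sig P U _ V R x (diagonal_sign_flip_mem_SO3 i)
    (commute_diagonal _ _)).symm

/-- For `𝒟_i` the diagonal matrix with `+1` in the `i`-th diagonal
entry and `−1` in the other two, the MFG density with parameters `(μ, Σ, P, U, S, V)`
equals the one with parameters `(μ, Σ, P𝒟_i, U𝒟_i, S, V𝒟_i)`. -/
theorem stmt19 (n : ℕ) (ν : Measure Mat3) (hν : IsHaarSO3 ν)
    (μ : Fin n → ℝ) (Sig : Matrix (Fin n) (Fin n) ℝ) (P : Matrix (Fin n) (Fin 3) ℝ)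
    (U V : Mat3) (hU : U ∈ SO3) (hV : V ∈ SO3) (hSig : Sig.IsSymm)
    (s : Fin 3 → ℝ) (S : Mat3) (hS : S = Matrix.diagonal s)
    (hc : (sigmaC Sig P S).PosDef)
    (i : Fin 3) (D : Mat3)
    (hD : D = Matrix.diagonal (fun k => if k = i then (1 : ℝ) else -1)) :
    ∀ R ∈ SO3, ∀ x : Fin n → ℝ,
      mfg ν μ Sig P U S V R x = mfg ν μ Sig (P * D) (U * D) S (V * D) R x :=
  stmt19_general n ν μ Sig P U V s S hS i D hD

end
end
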